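/- arXiv:2401.07351 — 2 statements merged into one kernel-verified Lean document; each statement's English description precedes it below -/
import Mathlib

section
/- Let n, x, k, r be integers with n = x·k + r, r ≥ 0, x ≥ 2, and 2^r · C(k, ⌈k/2⌉) < 2^x − 1. Then the base-(2^x − 1) digit list of 2^n is [2^r·C(k,0), 2^r·C(k,1), ..., 2^r·C(k,k)]; in particular 2^n has a binomial-form (hence palindromic) representation in base 2^x − 1. -/
/-!
With `b = 2^x - 1` we have `2^n = 2^r (b + 1)^k = ∑ 2^r C(k,i) b^i`. The central binomial
coefficient is the largest, so every coefficient `2^r C(k,i)` is below `b`: the binomial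
expansion has no carries and is therefore the base-`b` representation. It is a palindrome
because `C(k,i) = C(k,k-i)`.
-/

theorem List.palindrome_map_range_of_symm {α : Type*} (f : ℕ → α) (k : ℕ)
    (hf : ∀ i ≤ k, f (k - i) = f i) : ((List.range (k + 1)).map f).Palindrome := by
  refine .of_reverse_eq ?_
  rw [← List.map_reverse, List.range_eq_range', List.reverse_range', List.map_map,
    ← List.range_eq_range']
  refine List.map_congr_left fun i hi => ?_
  simpa using hf i (by simpa [Nat.lt_succ_iff] using hi)

theorem Nat.ofDigits_map_range (b : ℕ) (f : ℕ → ℕ) (m : ℕ) :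
    Nat.ofDigits b ((List.range m).map f) = ∑ i ∈ Finset.range m, f i * b ^ i := by
  induction m with
  | zero => simp
  | succ m ih =>
    rw [List.range_succ, List.map_append, Nat.ofDigits_append, ih, Finset.sum_range_succ]
    simp [mul_comm]

theorem Nat.choose_le_choose_succ_div_two (k i : ℕ) :
    k.choose i ≤ k.choose ((k + 1) / 2) := by
  rw [← Nat.choose_symm (n := k) (k := (k + 1) / 2) (by omega),
    show k - (k + 1) / 2 = k / 2 by omega]
  exact Nat.choose_le_middle i k

theorem Nat.ofDigits_map_range_mul_choose (b a k : ℕ) :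
    Nat.ofDigits b ((List.range (k + 1)).map fun i => a * k.choose i) = a * (b + 1) ^ k := by
  rw [Nat.ofDigits_map_range, add_pow, Finset.mul_sum]
  refine Finset.sum_congr rfl fun i _ => ?_
  push_cast
  ring

theorem Nat.digits_mul_succ_pow {a b k : ℕ} (ha : 0 < a) (h : a * k.choose ((k + 1) / 2) < b) :
    Nat.digits b (a * (b + 1) ^ k) = (List.range (k + 1)).map fun i => a * k.choose i := by
  have hb : 1 < b := by
    have := Nat.mul_pos ha (Nat.choose_pos (n := k) (k := (k + 1) / 2) (by omega))
    omega
  rw [← Nat.ofDigits_map_range_mul_choose]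
  refine Nat.digits_ofDigits b hb _ ?_ fun hne => ?_
  · simp only [List.mem_map, List.mem_range]
    rintro _ ⟨i, -, rfl⟩
    exact lt_of_le_of_lt (Nat.mul_le_mul_left a (Nat.choose_le_choose_succ_div_two k i)) h
  · simp [List.getLast_map, ha.ne']

theorem pow_two_binomial_form_general (n x k r : ℕ) (hn : n = x * k + r)
    (h : 2 ^ r * Nat.choose k ((k + 1) / 2) < 2 ^ x - 1) :
    Nat.digits (2 ^ x - 1) (2 ^ n)
        = (List.range (k + 1)).map (fun i => 2 ^ r * Nat.choose k i) ∧
      List.Palindrome (Nat.digits (2 ^ x - 1) (2 ^ n)) := by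
  have hpow : 2 ^ n = 2 ^ r * (2 ^ x - 1 + 1) ^ k := by
    rw [Nat.sub_add_cancel Nat.one_le_two_pow, hn, pow_add, pow_mul, mul_comm]
  have hdigits := hpow ▸ Nat.digits_mul_succ_pow (Nat.two_pow_pos r) h
  refine ⟨hdigits, hdigits ▸ List.palindrome_map_range_of_symm _ k fun i hi => ?_⟩
  rw [Nat.choose_symm hi]

/-- If `n = x*k + r` with `x ≥ 2` and `2^r * C(k, ⌈k/2⌉) < 2^x - 1`, then the
base-`(2^x - 1)` digit list of `2^n` is `[2^r*C(k,0), ..., 2^r*C(k,k)]`;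
in particular `2^n` has a binomial-form (hence palindromic) representation
in base `2^x - 1`. -/
theorem pow_two_binomial_form (n x k r : ℕ) (hx : 2 ≤ x) (hn : n = x * k + r)
    (h : 2 ^ r * Nat.choose k ((k + 1) / 2) < 2 ^ x - 1) :
    Nat.digits (2 ^ x - 1) (2 ^ n)
        = (List.range (k + 1)).map (fun i => 2 ^ r * Nat.choose k i) ∧
      List.Palindrome (Nat.digits (2 ^ x - 1) (2 ^ n)) :=
  pow_two_binomial_form_general n x k r hn h
end

section
/- Let x ≥ 2, k ≥ 1, r ≥ 0 and n be integers with n = k·x + r and k ≤ x − r. Then the base-(2^x − 1) digit list of 2^n is [2^r·C(k,0), 2^r·C(k,1), ..., 2^r·C(k,k)]; i.e., the representation of 2^n in base 2^x − 1 is the binomial form with multiplier α = 2^r. -/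
/-! Since `2^x = b + 1` for the base `b = 2^x - 1`, the binomial theorem gives
`2^n = 2^r (b + 1)^k = ∑ᵢ 2^r C(k,i) bⁱ`. This is the base-`b` expansion of `2^n` as soon as
every coefficient is a digit, and indeed `2^r C(k,i) ≤ 2^(r+k-1) ≤ 2^(x-1) < b`. -/

namespace Nat

theorem ofDigits_map_range_s13 (b m : ℕ) (f : ℕ → ℕ) :
    ofDigits b ((List.range m).map f) = ∑ i ∈ Finset.range m, f i * b ^ i := by
  induction m with
  | zero => simp
  | succ m ih =>
    rw [List.range_succ, List.map_append, ofDigits_append, Finset.sum_range_succ, ih]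
    simp [mul_comm]

theorem ofDigits_map_range_mul_choose_s13 (b α k : ℕ) :
    ofDigits b ((List.range (k + 1)).map (α * k.choose ·)) = α * (b + 1) ^ k := by
  rw [ofDigits_map_range_s13, add_pow, Finset.mul_sum]
  refine Finset.sum_congr rfl fun i _ => ?_
  simp only [one_pow, mul_one, cast_id]
  ring

theorem digits_mul_add_one_pow {b α k : ℕ} (hα : α ≠ 0)
    (hlt : ∀ i ≤ k, α * k.choose i < b) :
    digits b (α * (b + 1) ^ k) = (List.range (k + 1)).map (α * k.choose ·) := by
  have hb : 1 < b := by
    have := hlt 0 k.zero_le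
    rw [choose_zero_right, mul_one] at this
    omega
  rw [← ofDigits_map_range_mul_choose_s13]
  refine digits_ofDigits b hb _ ?_ fun _ => ?_
  · simp only [List.mem_map, List.mem_range]
    rintro _ ⟨i, hi, rfl⟩
    exact hlt i (Nat.lt_succ_iff.1 hi)
  · simp [List.getLast_eq_getElem, hα]

end Nat

/-- If `n = k·x + r` with `x ≥ 2`, `k ≥ 1` and `k ≤ x - r`, then the
base-`(2^x - 1)` digit list of `2^n` is `[2^r·C(k,0), ..., 2^r·C(k,k)]`,
i.e., the binomial form with multiplier `2^r`. -/
theorem binomial_form_of_small_k (x k r n : ℕ) (hx : 2 ≤ x) (hk : 1 ≤ k)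
    (hn : n = k * x + r) (hkr : k ≤ x - r) :
    Nat.digits (2 ^ x - 1) (2 ^ n)
      = (List.range (k + 1)).map (fun i => 2 ^ r * Nat.choose k i) := by
  obtain ⟨m, rfl⟩ : ∃ m, k = m + 1 := ⟨k - 1, by omega⟩
  have hpow : 2 ^ n = 2 ^ r * (2 ^ x - 1 + 1) ^ (m + 1) := by
    rw [Nat.sub_add_cancel Nat.one_le_two_pow, hn, ← pow_mul, pow_add, mul_comm x, mul_comm]
  rw [hpow]
  refine Nat.digits_mul_add_one_pow (by positivity) fun i _ => ?_
  have hhalf : 2 ^ (x - 1) < 2 ^ x - 1 := by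
    have htwo_le : 2 ≤ 2 ^ (x - 1) := Nat.le_self_pow (by omega) 2
    have hdouble : 2 ^ x = 2 * 2 ^ (x - 1) := by rw [← pow_succ']; congr 1; omega
    omega
  calc 2 ^ r * (m + 1).choose i ≤ 2 ^ r * 2 ^ m := by gcongr; exact Nat.choose_succ_le_two_pow m i
    _ = 2 ^ (r + m) := (pow_add 2 r m).symm
    _ ≤ 2 ^ (x - 1) := Nat.pow_le_pow_right two_pos (by omega)
    _ < 2 ^ x - 1 := hhalf
end
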